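/- arXiv:2401.05315 — 4 statements merged into one kernel-verified Lean document; each statement's English description precedes it below -/
import Mathlib

section
/- Let Σ be an n×n positive definite matrix, K ⊆ {1,…,n} a set of indices, W = Σ[·,K] (the n×|K| submatrix with columns restricted to K), V = Σ[K,K], and Φ an r'×|K| full-row-rank matrix. Then the Schur-type residual Σ − WΦᵀ(ΦVΦᵀ)⁻¹ΦWᵀ is positive semidefinite. -/
/-!
Selecting the columns in `K` is multiplication by the selection matrix `P = 1[K, ·]`, so
`W = S Pᵀ` and `V = P S Pᵀ`; with `C = Φ P` the residual becomes `S - S Cᵀ (C S Cᵀ)⁻¹ C S`.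
This is the Schur complement of the block `C S Cᵀ` in the Gram matrix
`[C; 1] S [C; 1]ᵀ = [[C S Cᵀ, C S], [S Cᵀ, S]]`, which is positive semidefinite.
-/

open Matrix

namespace Matrix

section Selection

variable {l m n α : Type*} [Fintype n] [DecidableEq n] [NonAssocSemiring α]

theorem submatrix_id_eq_mul_one_submatrix (M : Matrix m n α) (e : l → n) :
    M.submatrix id e = M * (1 : Matrix n n α).submatrix id e := by
  simpa using submatrix_mul M 1 id id e Function.bijective_id

theorem one_submatrix_mul_eq_submatrix_id (M : Matrix n m α) (e : l → n) :
    (1 : Matrix n n α).submatrix e id * M = M.submatrix e id := by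
  simpa using (submatrix_mul 1 M e id id Function.bijective_id).symm

theorem submatrix_eq_one_submatrix_mul_mul (M : Matrix n n α) (e₁ : l → n) (e₂ : m → n) :
    M.submatrix e₁ e₂ =
      (1 : Matrix n n α).submatrix e₁ id * M * (1 : Matrix n n α).submatrix id e₂ := by
  rw [one_submatrix_mul_eq_submatrix_id, ← submatrix_id_eq_mul_one_submatrix, submatrix_submatrix]
  rfl

end Selection

open scoped ComplexOrder in
theorem PosDef.posSemidef_sub_mul_conjTranspose_mul_inv_mul {m n 𝕜 : Type*} [Fintype m]
    [DecidableEq m] [Fintype n] [RCLike 𝕜] {S : Matrix n n 𝕜} (hS : S.PosDef)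
    (C : Matrix m n 𝕜) :
    (S - S * Cᴴ * (C * S * Cᴴ)⁻¹ * C * S).PosSemidef := by
  classical
  by_cases hA : IsUnit (C * S * Cᴴ)
  · have hApos : (C * S * Cᴴ).PosDef :=
      (hS.posSemidef.mul_mul_conjTranspose_same C).posDef_iff_isUnit.mpr hA
    have : Invertible (C * S * Cᴴ) := hA.invertible
    have hprod :
        fromRows C 1 * S * (fromRows C 1)ᴴ = fromBlocks (C * S * Cᴴ) (C * S) (C * S)ᴴ S := by
      rw [conjTranspose_fromRows_eq_fromCols_conjTranspose, fromRows_mul, fromRows_mul_fromCols,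
        conjTranspose_mul, hS.1.eq]
      simp [Matrix.mul_assoc]
    have hblock := hprod ▸ hS.posSemidef.mul_mul_conjTranspose_same (fromRows C 1)
    simpa [conjTranspose_mul, hS.1.eq, Matrix.mul_assoc] using
      (PosDef.fromBlocks₁₁ (C * S) S hApos).mp hblock
  -- A singular `C S Cᴴ` has junk inverse `0`, leaving just `S`.
  · rw [nonsing_inv_apply_not_isUnit _ (by rwa [← isUnit_iff_isUnit_det])]
    simpa using hS.posSemidef

end Matrix

theorem schur_residual_posSemidef_general (n r' : ℕ)
    (S : Matrix (Fin n) (Fin n) ℝ) (hS : S.PosDef)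
    (K : Finset (Fin n))
    (Φ : Matrix (Fin r') {k // k ∈ K} ℝ)
    (W : Matrix (Fin n) {k // k ∈ K} ℝ) (hW : W = S.submatrix id (fun k : {k // k ∈ K} => (k : Fin n)))
    (V : Matrix {k // k ∈ K} {k // k ∈ K} ℝ)
    (hV : V = S.submatrix (fun k : {k // k ∈ K} => (k : Fin n)) (fun k : {k // k ∈ K} => (k : Fin n))) :
    (S - W * Φᵀ * (Φ * V * Φᵀ)⁻¹ * Φ * Wᵀ).PosSemidef := by
  obtain ⟨P, hP, hPt⟩ : ∃ P : Matrix {k // k ∈ K} (Fin n) ℝ,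
      (1 : Matrix (Fin n) (Fin n) ℝ).submatrix (fun k : {k // k ∈ K} => (k : Fin n)) id = P ∧
      (1 : Matrix (Fin n) (Fin n) ℝ).submatrix id (fun k : {k // k ∈ K} => (k : Fin n)) = Pᵀ :=
    ⟨_, rfl, by rw [transpose_submatrix, transpose_one]⟩
  have hSt : Sᵀ = S := (conjTranspose_eq_transpose_of_trivial S).symm.trans hS.1.eq
  rw [submatrix_id_eq_mul_one_submatrix, hPt] at hW
  rw [submatrix_eq_one_submatrix_mul_mul, hP, hPt] at hV
  have hres : W * Φᵀ * (Φ * V * Φᵀ)⁻¹ * Φ * Wᵀ =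
      S * (Φ * P)ᴴ * (Φ * P * S * (Φ * P)ᴴ)⁻¹ * (Φ * P) * S := by
    simp only [hW, hV, conjTranspose_eq_transpose_of_trivial, transpose_mul, transpose_transpose,
      hSt, Matrix.mul_assoc]
  rw [hres]
  exact hS.posSemidef_sub_mul_conjTranspose_mul_inv_mul (Φ * P)

/-- Schur-type residual: with `Σ` positive definite, `K` a set of indices,
`W = Σ[·,K]`, `V = Σ[K,K]` and `Φ` of full row rank, the matrix
`Σ − W Φᵀ (Φ V Φᵀ)⁻¹ Φ Wᵀ` is positive semidefinite. -/
theorem schur_residual_posSemidef (n r' : ℕ)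
    (S : Matrix (Fin n) (Fin n) ℝ) (hS : S.PosDef)
    (K : Finset (Fin n))
    (Φ : Matrix (Fin r') {k // k ∈ K} ℝ) (hΦ : Φ.rank = r')
    (W : Matrix (Fin n) {k // k ∈ K} ℝ) (hW : W = S.submatrix id (fun k : {k // k ∈ K} => (k : Fin n)))
    (V : Matrix {k // k ∈ K} {k // k ∈ K} ℝ)
    (hV : V = S.submatrix (fun k : {k // k ∈ K} => (k : Fin n)) (fun k : {k // k ∈ K} => (k : Fin n))) :
    (S - W * Φᵀ * (Φ * V * Φᵀ)⁻¹ * Φ * Wᵀ).PosSemidef :=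
  schur_residual_posSemidef_general n r' S hS K Φ W hW V hV
end

section
/- Let Σ be positive definite of size n×n, D diagonal with nonnegative entries, and D^{1/2} its entrywise nonnegative square root. Then (Σ⁻¹ + D)⁻¹ = Σ − ΣD^{1/2}(I_n + D^{1/2}ΣD^{1/2})⁻¹D^{1/2}Σ. -/
open Matrix

lemma aux_ring {R : Type*} [Ring R] (s si f x : R)
    (h1 : si * s = 1) (h3 : f * s * f * x = 1 - x) :
    (si + f * f) * (s - s * f * x * f * s) = 1 := by
  have key : (si + f * f) * (s - s * f * x * f * s) - 1 =
      (si * s - 1) * (1 - f * x * f * s) - f * (f * s * f * x - (1 - x)) * (f * s) := by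
    noncomm_ring
  rw [h1, h3] at key
  simp only [sub_self, zero_mul, mul_zero, sub_zero] at key
  exact sub_eq_zero.mp key

/-- With `Σ` positive definite and `D` diagonal with nonnegative entries, letting
`D^{1/2}` be its entrywise square root,
`(Σ⁻¹ + D)⁻¹ = Σ − Σ D^{1/2} (I + D^{1/2} Σ D^{1/2})⁻¹ D^{1/2} Σ`. -/
theorem inv_precision_plus_diag_sqrt (n : ℕ)
    (S : Matrix (Fin n) (Fin n) ℝ) (hS : S.PosDef)
    (d : Fin n → ℝ) (hd : ∀ i, 0 ≤ d i)
    (D Dhalf : Matrix (Fin n) (Fin n) ℝ)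
    (hD : D = Matrix.diagonal d)
    (hDhalf : Dhalf = Matrix.diagonal fun i => Real.sqrt (d i)) :
    (S⁻¹ + D)⁻¹ = S - S * Dhalf * (1 + Dhalf * S * Dhalf)⁻¹ * Dhalf * S := by
  set M := 1 + Dhalf * S * Dhalf with hM
  have hDsym : Dhalfᴴ = Dhalf := by
    rw [hDhalf]
    simp [conjTranspose, Matrix.diagonal_transpose]
  have hMS : (Dhalf * S * Dhalf).PosSemidef := by
    have := hS.posSemidef.conjTranspose_mul_mul_same Dhalf
    rwa [hDsym] at this
  have hMpd : M.PosDef := by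
    rw [hM, add_comm]
    exact Matrix.PosDef.posSemidef_add hMS Matrix.PosDef.one
  have hMinv : M * M⁻¹ = 1 :=
    Matrix.mul_nonsing_inv M (isUnit_iff_ne_zero.mpr hMpd.det_pos.ne')
  have h1 : S⁻¹ * S = 1 :=
    Matrix.nonsing_inv_mul S (isUnit_iff_ne_zero.mpr hS.det_pos.ne')
  have hDD : D = Dhalf * Dhalf := by
    rw [hD, hDhalf, Matrix.diagonal_mul_diagonal]
    have h : (fun i => Real.sqrt (d i) * Real.sqrt (d i)) = d :=
      funext fun i => Real.mul_self_sqrt (hd i)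
    rw [h]
  have h3 : Dhalf * S * Dhalf * M⁻¹ = 1 - M⁻¹ := by
    have : (1 + Dhalf * S * Dhalf) * M⁻¹ = 1 := hMinv
    rw [add_mul, one_mul] at this
    exact eq_sub_of_add_eq' this
  have key : (S⁻¹ + D) * (S - S * Dhalf * M⁻¹ * Dhalf * S) = 1 := by
    rw [hDD]
    exact aux_ring S S⁻¹ Dhalf M⁻¹ h1 h3
  exact Matrix.inv_eq_right_inv key
end

section
/- If Σ is positive definite with Σ = BBᵀ for an n×N matrix B, H is an m×n matrix, R is m×m positive definite, Λ = I_N + BᵀHᵀR⁻¹HB, and L is any invertible matrix with Λ = LLᵀ, then with B' = B(L⁻¹)ᵀ one has B'B'ᵀ = (Σ⁻¹ + HᵀR⁻¹H)⁻¹, the Kalman filtering covariance. -/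
open Matrix

/-- Factor form of the Kalman update: if `Σ = B Bᵀ` is positive definite, `R` is
positive definite, `Λ = I + Bᵀ Hᵀ R⁻¹ H B = L Lᵀ` with `L` invertible, then
`B' = B (L⁻¹)ᵀ` satisfies `B' B'ᵀ = (Σ⁻¹ + Hᵀ R⁻¹ H)⁻¹`. -/
theorem kalman_factor_update (n N m : ℕ)
    (S : Matrix (Fin n) (Fin n) ℝ) (hS : S.PosDef)
    (B : Matrix (Fin n) (Fin N) ℝ) (hSB : S = B * Bᵀ)
    (H : Matrix (Fin m) (Fin n) ℝ)
    (R : Matrix (Fin m) (Fin m) ℝ) (hR : R.PosDef)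
    (Λ L : Matrix (Fin N) (Fin N) ℝ)
    (hΛ : Λ = 1 + Bᵀ * Hᵀ * R⁻¹ * H * B)
    (hL : IsUnit L.det) (hLL : Λ = L * Lᵀ)
    (B' : Matrix (Fin n) (Fin N) ℝ) (hB' : B' = B * (L⁻¹)ᵀ) :
    B' * B'ᵀ = (S⁻¹ + Hᵀ * R⁻¹ * H)⁻¹ := by
  have hSu : IsUnit S.det := isUnit_iff_ne_zero.mpr hS.det_pos.ne'
  have hΛu : IsUnit Λ.det := by
    rw [hLL, det_mul, det_transpose]; exact hL.mul hL
  have hBB' : B' * B'ᵀ = B * Λ⁻¹ * Bᵀ := by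
    rw [hB', transpose_mul, transpose_transpose, hLL, Matrix.mul_inv_rev,
      transpose_nonsing_inv]
    simp [Matrix.mul_assoc, Matrix.mul_add, Matrix.add_mul, Matrix.mul_one]
  rw [hBB']
  symm
  apply Matrix.inv_eq_right_inv
  have hkey : (S⁻¹ + Hᵀ * R⁻¹ * H) * B = S⁻¹ * B * Λ := by
    rw [hΛ, Matrix.mul_add, Matrix.mul_one, Matrix.add_mul]
    congr 1
    calc Hᵀ * R⁻¹ * H * B = S⁻¹ * S * (Hᵀ * R⁻¹ * H * B) := by
          rw [Matrix.nonsing_inv_mul S hSu, Matrix.one_mul]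
      _ = S⁻¹ * B * (Bᵀ * Hᵀ * R⁻¹ * H * B) := by rw [hSB]; simp [Matrix.mul_assoc, Matrix.mul_add, Matrix.add_mul, Matrix.mul_one]
  calc (S⁻¹ + Hᵀ * R⁻¹ * H) * (B * Λ⁻¹ * Bᵀ)
      = ((S⁻¹ + Hᵀ * R⁻¹ * H) * B) * Λ⁻¹ * Bᵀ := by simp [Matrix.mul_assoc, Matrix.mul_add, Matrix.add_mul, Matrix.mul_one]
    _ = S⁻¹ * B * (Λ * Λ⁻¹) * Bᵀ := by rw [hkey]; simp [Matrix.mul_assoc, Matrix.mul_add, Matrix.add_mul, Matrix.mul_one]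
    _ = S⁻¹ * (B * Bᵀ) := by rw [Matrix.mul_nonsing_inv Λ hΛu]; simp [Matrix.mul_assoc, Matrix.mul_add, Matrix.add_mul, Matrix.mul_one]
    _ = 1 := by rw [← hSB, Matrix.nonsing_inv_mul S hSu]
end

section
/- Let Λ be a symmetric positive definite matrix, and let G be the undirected graph on vertices {1,…,N} with an edge (i,j), i≠j, whenever Λ[i,j] ≠ 0 is permitted (i.e., edges given by the sparsity pattern of Λ). If L is the Cholesky factor of Λ (Λ = LLᵀ, L lower triangular with positive diagonal) and for some i > j the vertices i and j are in distinct connected components of G, then L[i,j] = 0. -/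
open Matrix Relation

/-! Expanding `(L * Lᵀ) i j = ∑ₖ L i k * L j k` for `i > j`, lower triangularity leaves only
`k ≤ j`. By induction on `j`, every term with `k < j` vanishes, because `k` is disconnected
from `i` or from `j`. What remains is `L i j * L j j`, so `Λ i j = 0` forces `L i j = 0`. -/

namespace Matrix

variable {ι R : Type*}

theorem equivalence_reflTransGen_adj [Zero R] {A : Matrix ι ι R} (hA : A.IsSymm) :
    Equivalence (ReflTransGen fun a b => a ≠ b ∧ A a b ≠ 0) := by
  have : Std.Symm fun a b => a ≠ b ∧ A a b ≠ 0 :=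
    ⟨fun a b ⟨hne, hab⟩ => ⟨hne.symm, hA.apply a b ▸ hab⟩⟩
  exact (equivalence_iff_isEquiv _).mpr ⟨⟩

theorem eq_zero_of_not_rel_of_mul_transpose [Fintype ι] [LinearOrder ι] [Semiring R]
    [NoZeroDivisors R] {r : ι → ι → Prop} (hr : Equivalence r)
    {L : Matrix ι ι R} (hlower : ∀ i j, i < j → L i j = 0) (hdiag : ∀ i, L i i ≠ 0)
    (hsupp : ∀ a b, a ≠ b → (L * Lᵀ) a b ≠ 0 → r a b) {i j : ι} (hij : ¬ r i j) : L i j = 0 := by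
  induction j using WellFoundedLT.induction generalizing i with
  | ind j ih =>
    have hsum : (L * Lᵀ) i j = L i j * L j j := by
      rw [mul_apply]
      refine Finset.sum_eq_single j (fun k _ hkj => ?_) (by simp)
      rcases hkj.lt_or_gt with hkj | hjk
      · by_cases hjk : r j k
        · rw [ih k hkj fun hik => hij (hr.trans hik (hr.symm hjk)), zero_mul]
        · rw [transpose_apply, ih k hkj hjk, mul_zero]
      · rw [transpose_apply, hlower j k hjk, mul_zero]
    have hne : i ≠ j := fun h => hij (h ▸ hr.refl i)
    have hΛ : (L * Lᵀ) i j = 0 := by_contra fun h => hij (hsupp i j hne h)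
    exact (mul_eq_zero.mp (hsum ▸ hΛ)).resolve_right (hdiag j)

end Matrix

theorem cholesky_no_fill_across_components_general (N : ℕ)
    (Λ : Matrix (Fin N) (Fin N) ℝ)
    (L : Matrix (Fin N) (Fin N) ℝ)
    (hlower : ∀ i j : Fin N, i < j → L i j = 0)
    (hdiag : ∀ i : Fin N, 0 < L i i)
    (hLL : Λ = L * Lᵀ)
    (i j : Fin N)
    (hcomp : ¬ Relation.ReflTransGen (fun a b : Fin N => a ≠ b ∧ Λ a b ≠ 0) i j) :
    L i j = 0 := by
  subst hLL
  exact eq_zero_of_not_rel_of_mul_transpose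
    (equivalence_reflTransGen_adj (isSymm_mul_transpose_self L)) hlower
    (fun i => (hdiag i).ne') (fun _ _ hne hab => .single ⟨hne, hab⟩) hcomp

/-- If `Λ = L Lᵀ` is symmetric positive definite with Cholesky factor `L` (lower
triangular with positive diagonal) and `i > j` lie in distinct connected components of
the adjacency graph of `Λ`, then `L i j = 0`. -/
theorem cholesky_no_fill_across_components (N : ℕ)
    (Λ : Matrix (Fin N) (Fin N) ℝ) (hΛ : Λ.PosDef)
    (L : Matrix (Fin N) (Fin N) ℝ)
    (hlower : ∀ i j : Fin N, i < j → L i j = 0)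
    (hdiag : ∀ i : Fin N, 0 < L i i)
    (hLL : Λ = L * Lᵀ)
    (i j : Fin N) (hij : j < i)
    (hcomp : ¬ Relation.ReflTransGen (fun a b : Fin N => a ≠ b ∧ Λ a b ≠ 0) i j) :
    L i j = 0 :=
  cholesky_no_fill_across_components_general N Λ L hlower hdiag hLL i j hcomp
end
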